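/- arXiv:math/0605144 — 4 statements merged into one kernel-verified Lean document; each statement's English description precedes it below -/
import Mathlib

section
/- For every natural number m, the coefficient of x^m in the power series expansion of 1/((1-x)(1-x²)(1-x³)) equals ⌊(m² + 6m + 12)/12⌋. -/
/-!
Since `(1 - x)(1 - x²)(1 - x³) = 1 - x - x² + x⁴ + x⁵ - x⁶`, it suffices that
`a m = ⌊(m² + 6m + 12)/12⌋` has the right first six values and satisfies
`a (m + 6) - a (m + 5) - a (m + 4) + a (m + 2) + a (m + 1) - a m = 0`.
The shift `a (m + 6) = a m + m + 6` is exact, and under it the linear terms of that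
recurrence cancel, so the recurrence only needs to be checked for `m < 6`.
-/

open PowerSeries

def quadFloor (m : ℕ) : ℕ := (m ^ 2 + 6 * m + 12) / 12

lemma quadFloor_add_six (m : ℕ) : quadFloor (m + 6) = quadFloor m + (m + 6) := by
  unfold quadFloor
  rw [show (m + 6) ^ 2 + 6 * (m + 6) + 12 = m ^ 2 + 6 * m + 12 + 12 * (m + 6) by ring,
    Nat.add_mul_div_left _ _ (by norm_num)]

lemma quadFloor_recurrence (m : ℕ) :
    quadFloor (m + 6) + quadFloor (m + 2) + quadFloor (m + 1) =
      quadFloor (m + 5) + quadFloor (m + 4) + quadFloor m := by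
  induction m using Nat.strong_induction_on with
  | _ m ih =>
    rcases Nat.lt_or_ge m 6 with hm | hm
    · interval_cases m <;> decide
    · obtain ⟨k, rfl⟩ := Nat.exists_eq_add_of_le' hm
      have h0 := quadFloor_add_six k
      have h1 : quadFloor (k + 6 + 1) = quadFloor (k + 1) + (k + 7) := quadFloor_add_six (k + 1)
      have h2 : quadFloor (k + 6 + 2) = quadFloor (k + 2) + (k + 8) := quadFloor_add_six (k + 2)
      have h4 : quadFloor (k + 6 + 4) = quadFloor (k + 4) + (k + 10) := quadFloor_add_six (k + 4)
      have h5 : quadFloor (k + 6 + 5) = quadFloor (k + 5) + (k + 11) := quadFloor_add_six (k + 5)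
      have h6 : quadFloor (k + 6 + 6) = quadFloor (k + 6) + (k + 12) := quadFloor_add_six (k + 6)
      have := ih k (by omega)
      omega

lemma mk_quadFloor_mul_eq_one {R : Type*} [CommRing R] :
    mk (fun m ↦ (quadFloor m : R)) * ((1 - X) * (1 - X ^ 2) * (1 - X ^ 3)) = 1 := by
  rw [show ((1 - X) * (1 - X ^ 2) * (1 - X ^ 3) : R⟦X⟧) =
    1 - X ^ 1 - X ^ 2 + X ^ 4 + X ^ 5 - X ^ 6 by ring]
  ext n
  simp only [mul_sub, mul_add, mul_one, map_sub, map_add, coeff_one, coeff_mul_X_pow', coeff_mk]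
  rcases Nat.lt_or_ge n 6 with hn | hn
  · interval_cases n <;> norm_num [quadFloor]
  · obtain ⟨m, rfl⟩ := Nat.exists_eq_add_of_le' hn
    simp (disch := omega) only [if_pos, if_neg]
    simp only [show m + 6 - 1 = m + 5 by omega, show m + 6 - 2 = m + 4 by omega,
      show m + 6 - 4 = m + 2 by omega, show m + 6 - 5 = m + 1 by omega, Nat.add_sub_cancel]
    have h := congrArg (Nat.cast (R := R)) (quadFloor_recurrence m)
    push_cast at h
    linear_combination h

/-- The coefficient of `x^m` in the power series expansion of
`1/((1-x)(1-x²)(1-x³))` equals `⌊(m² + 6m + 12)/12⌋`. -/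
theorem coeff_inv_one_sub_prod (m : ℕ) :
    PowerSeries.coeff (R := ℚ) m
      (((1 - PowerSeries.X) * (1 - PowerSeries.X ^ 2) * (1 - PowerSeries.X ^ 3))⁻¹)
      = ((m ^ 2 + 6 * m + 12) / 12 : ℕ) := by
  have hc : constantCoeff ((1 - X) * (1 - X ^ 2) * (1 - X ^ 3) : ℚ⟦X⟧) ≠ 0 := by
    simp
  rw [(inv_eq_iff_mul_eq_one hc).mpr mk_quadFloor_mul_eq_one, coeff_mk, quadFloor]
end

section
/- For every integer k ≥ 3 with k ≡ 0 (mod 12), the double sum S(k) = Σ_{δ₁ = ⌊(k+6)/6⌋}^{⌊k/2⌋} Σ_{δ₂ = max(δ₁, ⌊(k+1)/2⌋ − δ₁)}^{⌊k/2⌋} 1, plus the binomial coefficient C(⌊(k−1)/2⌋ − ⌊(k+6)/6⌋ + 2, 2), equals (5k² + 4k)/48. -/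
open Finset

lemma key (m : ℕ) :
    ∑ δ ∈ Finset.Icc (2*m+1) (6*m), (6*m + 1 - max δ (6*m - δ)) = 7*m^2 + 3*m := by
  have hsplit : (∑ δ ∈ Ioc (2*m) (3*m), (6*m + 1 - max δ (6*m - δ)))
      + (∑ δ ∈ Ioc (3*m) (6*m), (6*m + 1 - max δ (6*m - δ)))
      = ∑ δ ∈ Ioc (2*m) (6*m), (6*m + 1 - max δ (6*m - δ)) :=
    Finset.sum_Ioc_consecutive _ (by omega) (by omega)
  rw [show Icc (2*m+1) (6*m) = Ioc (2*m) (6*m) from Finset.Icc_add_one_left_eq_Ioc _ _, ← hsplit]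
  have h1 : ∑ δ ∈ Ioc (2*m) (3*m), (6*m + 1 - max δ (6*m - δ))
      = ∑ δ ∈ Ico (2*m+1) (3*m+1), (δ + 1) := by
    rw [show Ico (2*m+1) (3*m+1) = Ioc (2*m) (3*m) by rw [← Finset.Icc_add_one_left_eq_Ioc, Finset.Ico_add_one_right_eq_Icc]]
    refine Finset.sum_congr rfl fun x hx => ?_
    simp only [mem_Ioc] at hx; omega
  have h2 : ∑ δ ∈ Ioc (3*m) (6*m), (6*m + 1 - max δ (6*m - δ))
      = ∑ δ ∈ Ico (3*m+1) (6*m+1), (6*m + 1 - δ) := by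
    rw [show Ico (3*m+1) (6*m+1) = Ioc (3*m) (6*m) by rw [← Finset.Icc_add_one_left_eq_Ioc, Finset.Ico_add_one_right_eq_Icc]]
    refine Finset.sum_congr rfl fun x hx => ?_
    simp only [mem_Ioc] at hx; omega
  rw [h1, h2, Finset.sum_Ico_eq_sum_range, Finset.sum_Ico_eq_sum_range]
  have e1 : (3*m + 1 - (2*m+1)) = m := by omega
  have e2 : (6*m + 1 - (3*m+1)) = 3*m := by omega
  rw [e1, e2]
  have g1 : ∑ i ∈ range m, (2*m+1+i+1) = (∑ i ∈ range m, i) + m * (2*m+2) := by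
    have : ∀ i, 2*m+1+i+1 = i + (2*m+2) := fun i => by omega
    simp only [this, Finset.sum_add_distrib, Finset.sum_const, card_range, smul_eq_mul]
    ring
  have g2 : ∑ i ∈ range (3*m), (6*m+1 - (3*m+1+i)) = (∑ i ∈ range (3*m), i) + 3*m := by
    rw [← Finset.sum_range_reflect (fun i => 6*m+1 - (3*m+1+i)) (3*m)]
    have : ∀ i ∈ range (3*m), 6*m+1 - (3*m+1+(3*m-1-i)) = i + 1 := fun i hi => by
      simp only [mem_range] at hi; omega
    rw [Finset.sum_congr rfl this, Finset.sum_add_distrib, Finset.sum_const, card_range,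
      smul_eq_mul, mul_one]
  rw [g1, g2]
  have t1 : (∑ i ∈ range m, i) * 2 = m * (m - 1) := Finset.sum_range_id_mul_two m
  have t2 : (∑ i ∈ range (3*m), i) * 2 = (3*m) * (3*m - 1) := Finset.sum_range_id_mul_two (3*m)
  rcases Nat.eq_zero_or_pos m with hm | hm
  · subst hm; simp
  · obtain ⟨n, rfl⟩ : ∃ n, m = n + 1 := ⟨m - 1, by omega⟩
    simp only [Nat.add_sub_cancel] at t1
    have e3 : 3*(n+1) - 1 = 3*n + 2 := by omega
    rw [e3] at t2
    nlinarith [t1, t2]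

/-- For `k ≡ 0 (mod 12)`, `k ≥ 3`, the double sum
`S(k) = Σ_{δ₁=⌊(k+6)/6⌋}^{⌊k/2⌋} Σ_{δ₂=max(δ₁,⌊(k+1)/2⌋−δ₁)}^{⌊k/2⌋} 1`
plus `C(⌊(k−1)/2⌋ − ⌊(k+6)/6⌋ + 2, 2)` equals `(5k² + 4k)/48`. -/
theorem count_paths_mod_zero (k : ℕ) (hk : 3 ≤ k) (hmod : k % 12 = 0) :
    (∑ δ₁ ∈ Finset.Icc ((k + 6) / 6) (k / 2),
        ∑ δ₂ ∈ Finset.Icc (max δ₁ ((k + 1) / 2 - δ₁)) (k / 2), 1)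
      + Nat.choose ((k - 1) / 2 - (k + 6) / 6 + 2) 2
      = (5 * k ^ 2 + 4 * k) / 48 := by
  obtain ⟨m, rfl⟩ : ∃ m, k = 12 * m := ⟨k / 12, by omega⟩
  have hm : 1 ≤ m := by omega
  have b1 : (12*m + 6) / 6 = 2*m + 1 := by omega
  have b2 : (12*m) / 2 = 6*m := by omega
  have b3 : (12*m + 1) / 2 = 6*m := by omega
  have b4 : (12*m - 1) / 2 = 6*m - 1 := by omega
  rw [b1, b2, b3, b4]
  have hsum : (∑ δ₁ ∈ Finset.Icc (2*m+1) (6*m),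
      ∑ δ₂ ∈ Finset.Icc (max δ₁ (6*m - δ₁)) (6*m), 1) = 7*m^2 + 3*m := by
    rw [← key m]
    refine Finset.sum_congr rfl fun x hx => ?_
    rw [Finset.sum_const, smul_eq_mul, mul_one, Nat.card_Icc]
  rw [hsum]
  have hch : (6*m - 1 - (2*m+1) + 2) = 4*m := by omega
  rw [hch, Nat.choose_two_right]
  obtain ⟨n, rfl⟩ : ∃ n, m = n + 1 := ⟨m - 1, by omega⟩
  have c1 : 4*(n+1) - 1 = 4*n+3 := by omega
  rw [c1]
  have c2 : 4*(n+1)*(4*n+3) = (8*n^2+14*n+6)*2 := by ring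
  rw [c2, Nat.mul_div_cancel _ two_pos]
  have c3 : 5*(12*(n+1))^2 + 4*(12*(n+1)) = (15*(n+1)^2+(n+1))*48 := by ring
  rw [c3, Nat.mul_div_cancel _ (by norm_num : (0:ℕ) < 48)]
  ring
end

section
/- For every integer k ≥ 3 with k ≡ 6 (mod 12), the quantity S(k) + C(⌊(k−1)/2⌋ − ⌊(k+6)/6⌋ + 2, 2) equals (5k² + 4k − 12)/48, where S(k) = Σ_{δ₁ = ⌊(k+6)/6⌋}^{⌊k/2⌋} Σ_{δ₂ = max(δ₁, ⌊(k+1)/2⌋ − δ₁)}^{⌊k/2⌋} 1. -/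
lemma gauss_aux (c : ℕ) : ∀ n : ℕ, (∑ i ∈ Finset.range n, (c + i + 1)) * 2 = n * (2*c + n + 1)
  | 0 => by simp
  | n + 1 => by
    rw [Finset.sum_range_succ, add_mul, gauss_aux c n]; ring

/-- For `k ≡ 6 (mod 12)`, `k ≥ 3`, the quantity
`S(k) + C(⌊(k−1)/2⌋ − ⌊(k+6)/6⌋ + 2, 2)` equals `(5k² + 4k − 12)/48`, where
`S(k) = Σ_{δ₁=⌊(k+6)/6⌋}^{⌊k/2⌋} Σ_{δ₂=max(δ₁,⌊(k+1)/2⌋−δ₁)}^{⌊k/2⌋} 1`. -/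
theorem count_paths_mod_six (k : ℕ) (hk : 3 ≤ k) (hmod : k % 12 = 6) :
    (∑ δ₁ ∈ Finset.Icc ((k + 6) / 6) (k / 2),
        ∑ δ₂ ∈ Finset.Icc (max δ₁ ((k + 1) / 2 - δ₁)) (k / 2), 1)
      + Nat.choose ((k - 1) / 2 - (k + 6) / 6 + 2) 2
      = (5 * k ^ 2 + 4 * k - 12) / 48 := by
  obtain ⟨m, rfl⟩ : ∃ m, k = 12 * m + 6 := ⟨k / 12, by omega⟩
  rw [show (12*m+6+6)/6 = 2*m+2 by omega, show (12*m+6)/2 = 6*m+3 by omega,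
      show (12*m+6+1)/2 = 6*m+3 by omega, show (12*m+6-1)/2 = 6*m+2 by omega]
  -- inner sum to card
  have hin : ∀ δ₁, (∑ δ₂ ∈ Finset.Icc (max δ₁ (6*m+3 - δ₁)) (6*m+3), (1:ℕ))
      = 6*m+4 - max δ₁ (6*m+3 - δ₁) := by
    intro δ₁; rw [Finset.sum_const, smul_eq_mul, mul_one, Nat.card_Icc]
  simp only [hin]
  -- convert to range sum
  rw [show Finset.Icc (2*m+2) (6*m+3) = Finset.Ico (2*m+2) (6*m+4) from
        (Finset.Ico_add_one_right_eq_Icc _ _).symm,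
      Finset.sum_Ico_eq_sum_range,
      show 6*m+4 - (2*m+2) = m + (3*m+2) by omega,
      Finset.sum_range_add]
  have e1 : (∑ i ∈ Finset.range m, (6*m+4 - max (2*m+2+i) (6*m+3 - (2*m+2+i))))
      = ∑ i ∈ Finset.range m, ((2*m+2) + i + 1) := by
    apply Finset.sum_congr rfl
    intro i hi
    have hi' : i < m := Finset.mem_range.mp hi
    rw [Nat.max_eq_right (by omega)]
    omega
  have e2 : (∑ j ∈ Finset.range (3*m+2), (6*m+4 - max (2*m+2+(m+j)) (6*m+3 - (2*m+2+(m+j)))))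
      = ∑ j ∈ Finset.range (3*m+2), (3*m+2 - j) := by
    apply Finset.sum_congr rfl
    intro j hj
    have hj' : j < 3*m+2 := Finset.mem_range.mp hj
    rw [Nat.max_eq_left (by omega)]
    omega
  have e3 : (∑ j ∈ Finset.range (3*m+2), (3*m+2 - j))
      = ∑ j ∈ Finset.range (3*m+2), (0 + j + 1) := by
    rw [← Finset.sum_range_reflect]
    apply Finset.sum_congr rfl
    intro j hj
    have hj' : j < 3*m+2 := Finset.mem_range.mp hj
    omega
  rw [e1, e2, e3]
  -- choose
  rw [show 6*m+2 - (2*m+2) + 2 = 4*m+2 by omega]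
  have hc : (4*m+2).choose 2 = 8*m^2+6*m+1 := by
    rw [Nat.choose_two_right, show 4*m+2-1 = 4*m+1 by omega,
        show (4*m+2)*(4*m+1) = (8*m^2+6*m+1)*2 by ring, Nat.mul_div_cancel _ (by norm_num)]
  rw [hc]
  -- RHS
  have hr : (5 * (12*m+6) ^ 2 + 4 * (12*m+6) - 12) / 48 = 15*m^2+16*m+4 := by
    rw [show (12*m+6)^2 = 144*m^2+144*m+36 by ring]
    generalize m^2 = M
    omega
  rw [hr]
  have g1 := gauss_aux (2*m+2) m
  have g2 := gauss_aux 0 (3*m+2)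
  rw [show m * (2*(2*m+2) + m + 1) = 5*m^2+5*m by ring] at g1
  rw [show (3*m+2) * (2*0 + (3*m+2) + 1) = 9*m^2+15*m+6 by ring] at g2
  generalize (∑ i ∈ Finset.range m, ((2*m+2) + i + 1)) = s1 at g1 ⊢
  generalize (∑ j ∈ Finset.range (3*m+2), (0 + j + 1)) = s2 at g2 ⊢
  generalize m^2 = M at g1 g2 ⊢
  omega
end

section
/- Every polyomino consisting of n unit squares has at least 2n + ⌈2√n⌉ edges. -/
/-!
Let the cells occupy `w` columns and `h` rows. The horizontal edges are the bottom edges of the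
cells together with their top edges; besides the `n` bottom edges, every column contributes the top
edge of its highest cell, which is no cell's bottom edge. Hence there are at least `n + w`
horizontal and, symmetrically, `n + h` vertical edges. Since the cells lie in a `w × h` box,
`n ≤ w h`, and AM-GM gives `w + h ≥ 2√n`.
-/

/-- Two lattice cells are adjacent if they share an edge. -/
def CellAdj (a b : ℤ × ℤ) : Prop :=
  (a.1 - b.1).natAbs + (a.2 - b.2).natAbs = 1

/-- A finite set of lattice cells is edge-connected. -/
def IsPolyomino (s : Finset (ℤ × ℤ)) : Prop :=
  s.Nonempty ∧ ∀ c ∈ s, ∀ d ∈ s,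
    Relation.ReflTransGen (fun a b => a ∈ s ∧ b ∈ s ∧ CellAdj a b) c d

/-- The number of (unit lattice segment) edges of a polyomino, shared edges
counted once. -/
def edgeCount (s : Finset (ℤ × ℤ)) : ℕ :=
  (s.biUnion (fun c => {(c.1, c.2), (c.1, c.2 + 1)})).card +
  (s.biUnion (fun c => {(c.1, c.2), (c.1 + 1, c.2)})).card

namespace Finset

variable {α : Type*} [DecidableEq α]

theorem biUnion_pair_eq_union_image (s : Finset α) (f : α → α) :
    s.biUnion (fun c => {c, f c}) = s ∪ s.image f := by
  ext x
  simp only [mem_biUnion, mem_insert, mem_singleton, mem_union, mem_image]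
  constructor
  · rintro ⟨c, hc, rfl | rfl⟩
    exacts [.inl hc, .inr ⟨c, hc, rfl⟩]
  · rintro (hx | ⟨c, hc, rfl⟩)
    exacts [⟨x, hx, .inl rfl⟩, ⟨c, hc, .inr rfl⟩]

theorem card_add_card_image_fst_le_card_union_shift (s : Finset (α × ℤ)) :
    #s + #(s.image Prod.fst) ≤ #(s ∪ s.image fun c => (c.1, c.2 + 1)) := by
  set t := s ∪ s.image fun c => (c.1, c.2 + 1)
  have hcols : s.image Prod.fst ⊆ (t \ s).image Prod.fst := by
    intro x hx
    obtain ⟨c, hcs, rfl⟩ := mem_image.1 hx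
    obtain ⟨top, htop, hmax⟩ :=
      (s.filter (·.1 = c.1)).exists_max_image Prod.snd ⟨c, mem_filter.2 ⟨hcs, rfl⟩⟩
    obtain ⟨htops, htopc⟩ := mem_filter.1 htop
    have habove : (top.1, top.2 + 1) ∉ s := fun h =>
      (hmax _ (mem_filter.2 ⟨h, htopc⟩)).not_gt (lt_add_one top.2)
    exact mem_image.2 ⟨_, mem_sdiff.2 ⟨mem_union_right _ (mem_image_of_mem _ htops), habove⟩,
      htopc⟩
  calc #s + #(s.image Prod.fst) ≤ #s + #(t \ s) := by
        gcongr
        exact (card_le_card hcols).trans card_image_le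
    _ = #t := by rw [add_comm, card_sdiff_add_card_eq_card subset_union_left]

theorem card_add_card_image_snd_le_card_union_shift (s : Finset (ℤ × α)) :
    #s + #(s.image Prod.snd) ≤ #(s ∪ s.image fun c => (c.1 + 1, c.2)) := by
  have hswap : (s.image Prod.swap ∪ (s.image Prod.swap).image fun c => (c.1, c.2 + 1)) =
      (s ∪ s.image fun c => (c.1 + 1, c.2)).image Prod.swap := by
    rw [image_union, image_image, image_image]
    rfl
  have h := card_add_card_image_fst_le_card_union_shift (s.image Prod.swap)
  rwa [hswap, image_image, card_image_of_injective _ Prod.swap_injective,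
    card_image_of_injective _ Prod.swap_injective] at h

theorem card_le_card_image_fst_mul_card_image_snd {β : Type*} [DecidableEq β]
    (s : Finset (α × β)) : #s ≤ #(s.image Prod.fst) * #(s.image Prod.snd) :=
  (card_le_card subset_product).trans (card_product _ _).le

end Finset

open Finset in
theorem two_mul_card_add_card_image_fst_add_card_image_snd_le_edgeCount (s : Finset (ℤ × ℤ)) :
    2 * #s + #(s.image Prod.fst) + #(s.image Prod.snd) ≤ edgeCount s := by
  have hhor := card_add_card_image_fst_le_card_union_shift s
  have hver := card_add_card_image_snd_le_card_union_shift s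
  rw [← biUnion_pair_eq_union_image] at hhor hver
  unfold edgeCount
  simp only [Prod.mk.eta]
  omega

theorem min_edges_polyomino_general (n : ℕ)
    (s : Finset (ℤ × ℤ)) (hcard : s.card = n) :
    2 * (n : ℤ) + ⌈2 * Real.sqrt n⌉ ≤ (edgeCount s : ℤ) := by
  subst hcard
  set w := (s.image Prod.fst).card
  set h := (s.image Prod.snd).card
  have hedges : 2 * s.card + w + h ≤ edgeCount s :=
    two_mul_card_add_card_image_fst_add_card_image_snd_le_edgeCount s
  have hbox : (s.card : ℝ) ≤ w * h := by
    exact_mod_cast s.card_le_card_image_fst_mul_card_image_snd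
  have hamgm : ⌈2 * Real.sqrt s.card⌉ ≤ (w : ℤ) + h := by
    refine Int.ceil_le.2 ?_
    push_cast
    exact two_mul_le_add_of_sq_le_mul (Nat.cast_nonneg w) (Nat.cast_nonneg h)
      ((Real.sq_sqrt (Nat.cast_nonneg _)).trans_le hbox)
  omega

/-- Every polyomino with `n` unit squares has at least `2n + ⌈2√n⌉` edges. -/
theorem min_edges_polyomino (n : ℕ) (hn : 1 ≤ n)
    (s : Finset (ℤ × ℤ)) (hcard : s.card = n) (hpoly : IsPolyomino s) :
    2 * (n : ℤ) + ⌈2 * Real.sqrt n⌉ ≤ (edgeCount s : ℤ) :=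
  min_edges_polyomino_general n s hcard
end
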